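/- arXiv:1711.08940 — 3 statements merged into one kernel-verified Lean document; each statement's English description precedes it below -/
import Mathlib

section
/- Let β₁,…,βₙ ∈ ℤᵏ be weights spanning ℝᵏ. The rational function map [λ₁:…:λₖ] ↦ (∏ⱼ (λ·βⱼ)^{β_{ji}})_{i=1,…,k} (the Horn uniformization) is constant (as a k-tuple of degree-0 rational functions in λ₁,…,λₖ) if and only if the weights are quasi-symmetric, i.e., for every line ℓ ⊂ ℝᵏ through the origin, Σ_{j : βⱼ ∈ ℓ} βⱼ = 0. -/
open Classical MvPolynomial

namespace HornAux

variable {n k : ℕ}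

noncomputable def Lq (c : Fin k → ℚ) : MvPolynomial (Fin k) ℚ :=
  ∑ s, MvPolynomial.C (c s) * MvPolynomial.X s

lemma coeff_Lq (c : Fin k → ℚ) (s : Fin k) :
    (Lq c).coeff (Finsupp.single s 1) = c s := by
  classical
  simp only [Lq, MvPolynomial.coeff_sum, MvPolynomial.coeff_C_mul, MvPolynomial.coeff_X']
  rw [Finset.sum_eq_single s]
  · simp
  · intro t _ hts
    simp [Finsupp.single_left_inj (one_ne_zero), (hts : t ≠ s)]
  · simp

lemma Lq_ne_zero {c : Fin k → ℚ} (hc : c ≠ 0) : Lq c ≠ 0 := by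
  obtain ⟨s, hs⟩ := Function.ne_iff.1 hc
  intro h
  apply hs
  have := coeff_Lq c s
  rw [h] at this
  simpa using this.symm

noncomputable def L (β : Fin n → Fin k → ℤ) (j : Fin n) : MvPolynomial (Fin k) ℚ :=
  ∑ s, (β j s : ℚ) • MvPolynomial.X s

lemma L_eq_Lq (β : Fin n → Fin k → ℤ) (j : Fin n) :
    L β j = Lq (fun s => (β j s : ℚ)) := by
  simp [L, Lq, MvPolynomial.smul_eq_C_mul]

lemma L_ne_zero {β : Fin n → Fin k → ℤ} {j : Fin n} (hβ : β j ≠ 0) : L β j ≠ 0 := by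
  rw [L_eq_Lq]
  apply Lq_ne_zero
  intro h
  apply hβ
  funext s
  have := congrFun h s
  simpa using this

def par (β : Fin n → Fin k → ℤ) (t j : Fin n) : Prop :=
  ∃ r : ℚ, ∀ s, (β j s : ℚ) = r * β t s

lemma par_refl (β : Fin n → Fin k → ℤ) (t : Fin n) : par β t t :=
  ⟨1, fun s => by ring⟩

lemma par_r_ne_zero {β : Fin n → Fin k → ℤ} {t j : Fin n} (hj : β j ≠ 0)
    {r : ℚ} (hr : ∀ s, (β j s : ℚ) = r * β t s) : r ≠ 0 := by
  rintro rfl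
  apply hj
  funext s
  have := hr s
  simp at this
  exact_mod_cast this

lemma par_symm {β : Fin n → Fin k → ℤ} {t j : Fin n} (hj : β j ≠ 0)
    (h : par β t j) : par β j t := by
  obtain ⟨r, hr⟩ := h
  have hr0 := par_r_ne_zero hj hr
  exact ⟨r⁻¹, fun s => by rw [hr s]; field_simp⟩

lemma par_trans {β : Fin n → Fin k → ℤ} {t j l : Fin n}
    (h1 : par β t j) (h2 : par β j l) : par β t l := by
  obtain ⟨r, hr⟩ := h1
  obtain ⟨r', hr'⟩ := h2
  exact ⟨r' * r, fun s => by rw [hr' s, hr s]; ring⟩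

lemma mem_span_iff_par {β : Fin n → Fin k → ℤ} {t j : Fin n} (ht : β t ≠ 0) :
    ((fun s => (β j s : ℝ)) ∈ Submodule.span ℝ {fun s => (β t s : ℝ)}) ↔ par β t j := by
  rw [Submodule.mem_span_singleton]
  constructor
  · rintro ⟨c, hc⟩
    obtain ⟨s₀, hs₀⟩ := Function.ne_iff.1 ht
    have hc0 : c * (β t s₀ : ℝ) = (β j s₀ : ℝ) := by
      have := congrFun hc s₀
      simpa using this
    set r : ℚ := (β j s₀ : ℚ) / (β t s₀ : ℚ) with hrdef
    have hts₀ : ((β t s₀ : ℚ) : ℝ) ≠ 0 := by exact_mod_cast hs₀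
    have hcr : c = (r : ℝ) := by
      have h2 : (r : ℝ) * (β t s₀ : ℝ) = (β j s₀ : ℝ) := by
        rw [hrdef]
        push_cast
        exact div_mul_cancel₀ _ hts₀
      have := mul_right_cancel₀ (show ((β t s₀:ℤ):ℝ) ≠ 0 by exact_mod_cast hs₀) (hc0.trans h2.symm)
      exact this
    refine ⟨r, fun s => ?_⟩
    have := congrFun hc s
    simp only [Pi.smul_apply, smul_eq_mul] at this
    have : ((β j s : ℚ) : ℝ) = ((r * β t s : ℚ) : ℝ) := by
      push_cast
      rw [← this, hcr]
    exact_mod_cast this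
  · rintro ⟨r, hr⟩
    refine ⟨(r : ℝ), funext fun s => ?_⟩
    simp only [Pi.smul_apply, smul_eq_mul]
    exact_mod_cast (hr s).symm

lemma rootMult_prod {ι : Type*} (s : Finset ι) (f : ι → Polynomial ℚ)
    (hf : ∀ j ∈ s, f j ≠ 0) (x : ℚ) :
    (∏ j ∈ s, f j).rootMultiplicity x = ∑ j ∈ s, (f j).rootMultiplicity x := by
  classical
  induction s using Finset.cons_induction with
  | empty =>
    simp only [Finset.prod_empty, Finset.sum_empty]
    rw [show ((1:Polynomial ℚ) = Polynomial.C 1) by simp, Polynomial.rootMultiplicity_C]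
  | cons a s ha ih =>
    rw [Finset.prod_cons, Finset.sum_cons,
      Polynomial.rootMultiplicity_mul, ih (fun j hj => hf j (Finset.mem_cons_of_mem hj))]
    exact mul_ne_zero (hf a (Finset.mem_cons_self a s))
      (Finset.prod_ne_zero_iff.2 fun j hj => hf j (Finset.mem_cons_of_mem hj))

lemma rootMult_pow {p : Polynomial ℚ} (hp : p ≠ 0) (m : ℕ) (x : ℚ) :
    (p ^ m).rootMultiplicity x = m * p.rootMultiplicity x := by
  induction m with
  | zero =>
    simp only [pow_zero, Nat.zero_mul]
    rw [show ((1:Polynomial ℚ) = Polynomial.C 1) by simp, Polynomial.rootMultiplicity_C]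
  | succ m ih =>
    rw [pow_succ, Polynomial.rootMultiplicity_mul (mul_ne_zero (pow_ne_zero _ hp) hp), ih]
    ring

lemma eval2_linear (A B : Fin k → ℚ) (c : Fin k → ℚ) :
    MvPolynomial.eval₂ Polynomial.C
        (fun s => Polynomial.C (A s) + Polynomial.X * Polynomial.C (B s)) (Lq c) =
      Polynomial.C (∑ s, c s * A s) + Polynomial.X * Polynomial.C (∑ s, c s * B s) := by
  classical
  rw [Lq]
  rw [show (MvPolynomial.eval₂ Polynomial.C
      (fun s => Polynomial.C (A s) + Polynomial.X * Polynomial.C (B s)))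
    = (MvPolynomial.eval₂Hom Polynomial.C
      (fun s => Polynomial.C (A s) + Polynomial.X * Polynomial.C (B s)) : _ →+* _) from rfl]
  rw [map_sum]
  have : ∀ s : Fin k,
      (MvPolynomial.eval₂Hom Polynomial.C
        (fun s => Polynomial.C (A s) + Polynomial.X * Polynomial.C (B s)))
        (MvPolynomial.C (c s) * MvPolynomial.X s)
      = Polynomial.C (c s * A s) + Polynomial.X * Polynomial.C (c s * B s) := by
    intro s
    rw [map_mul, MvPolynomial.eval₂Hom_C, MvPolynomial.eval₂Hom_X']
    rw [show Polynomial.C (c s) * (Polynomial.C (A s) + Polynomial.X * Polynomial.C (B s))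
        = (Polynomial.C (c s) * Polynomial.C (A s))
          + Polynomial.X * (Polynomial.C (c s) * Polynomial.C (B s)) by ring,
      ← Polynomial.C_mul, ← Polynomial.C_mul]
  rw [Finset.sum_congr rfl (fun s _ => this s), Finset.sum_add_distrib,
    ← map_sum Polynomial.C, ← Finset.mul_sum, ← map_sum Polynomial.C]

lemma rootMult_linear_of_ne (e g : ℚ) (he : e ≠ 0) :
    (Polynomial.C e + Polynomial.X * Polynomial.C g).rootMultiplicity 0 = 0 := by
  apply Polynomial.rootMultiplicity_eq_zero
  simp [Polynomial.IsRoot, he]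

lemma rootMult_linear_of_root (g : ℚ) (hg : g ≠ 0) :
    (Polynomial.C (0:ℚ) + Polynomial.X * Polynomial.C g).rootMultiplicity 0 = 1 := by
  rw [map_zero, zero_add, Polynomial.rootMultiplicity_mul
    (mul_ne_zero Polynomial.X_ne_zero (by simpa using hg))]
  have h1 : (Polynomial.X : Polynomial ℚ).rootMultiplicity 0 = 1 := by
    have := Polynomial.rootMultiplicity_X_sub_C_self (x := (0:ℚ))
    simpa using this
  rw [h1, Polynomial.rootMultiplicity_C]

end HornAux

namespace HornAux

variable {n k : ℕ}

open Polynomial in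
lemma forward_key (β : Fin n → Fin k → ℤ) (hβ : ∀ j, β j ≠ 0) (i : Fin k) (t : Fin n) (q : ℚ)
    (hq : (∏ j : Fin n,
        (algebraMap (MvPolynomial (Fin k) ℚ) (FractionRing (MvPolynomial (Fin k) ℚ))
          (L β j)) ^ (β j i)) =
      algebraMap (MvPolynomial (Fin k) ℚ) (FractionRing (MvPolynomial (Fin k) ℚ))
        (MvPolynomial.C q)) :
    ∑ j ∈ Finset.univ.filter (par β t), β j i = 0 := by
  classical
  set φ := algebraMap (MvPolynomial (Fin k) ℚ) (FractionRing (MvPolynomial (Fin k) ℚ)) with hφ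
  have hinj : Function.Injective φ := IsFractionRing.injective _ _
  have hL0 : ∀ j, φ (L β j) ≠ 0 := fun j => by
    rw [map_ne_zero_iff φ hinj]
    exact L_ne_zero (hβ j)
  set a : Fin n → ℕ := fun j => (β j i).toNat with ha
  set b : Fin n → ℕ := fun j => (-(β j i)).toNat with hb
  -- turn the fraction-field identity into a polynomial identity
  have hstep : ∀ j : Fin n, φ (L β j) ^ (β j i)
      = φ (L β j) ^ (a j) * (φ (L β j) ^ (b j))⁻¹ := by
    intro j
    rw [← div_eq_mul_inv, ← zpow_natCast (φ (L β j)) (a j), ← zpow_natCast (φ (L β j)) (b j),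
      ← zpow_sub₀ (hL0 j)]
    congr 1
    simp only [ha, hb]
    omega
  rw [Finset.prod_congr rfl (fun j _ => hstep j), Finset.prod_mul_distrib,
    Finset.prod_inv_distrib] at hq
  have hBne : (∏ j : Fin n, φ (L β j) ^ (b j)) ≠ 0 :=
    Finset.prod_ne_zero_iff.2 fun j _ => pow_ne_zero _ (hL0 j)
  rw [← div_eq_mul_inv, div_eq_iff hBne] at hq
  have hqne : q ≠ 0 := by
    rintro rfl
    rw [map_zero, map_zero, zero_mul] at hq
    exact Finset.prod_ne_zero_iff.2 (fun j _ => pow_ne_zero _ (hL0 j)) hq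
  have E : (∏ j : Fin n, L β j ^ (a j))
      = MvPolynomial.C q * ∏ j : Fin n, L β j ^ (b j) := by
    apply hinj
    rw [map_mul, map_prod, map_prod]
    simpa only [map_pow] using hq
  -- set up the substitution data
  set w : Fin k → ℚ := fun s => (β t s : ℚ) with hw
  have hwne : w ≠ 0 := by
    intro h
    apply hβ t
    funext s
    show β t s = 0
    have : (β t s : ℚ) = 0 := by simpa [hw] using congrFun h s
    exact_mod_cast this
  set W : ℚ := ∑ s, w s ^ 2 with hW
  have hWne : W ≠ 0 := by
    intro h
    apply hwne
    funext s
    show w s = 0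
    rw [hW] at h
    have := (Finset.sum_eq_zero_iff_of_nonneg (fun s _ => sq_nonneg (w s))).1 h s (Finset.mem_univ s)
    exact pow_eq_zero_iff (two_ne_zero) |>.1 this
  set g : Fin n → ℚ := fun j => ∑ s, (β j s : ℚ) * w s with hg
  set m : Fin n → Fin k → ℚ := fun j s => W * β j s - g j * w s with hm
  have hmne : ∀ j, ¬ par β t j → m j ≠ 0 := by
    intro j hnp h
    apply hnp
    refine ⟨g j / W, fun s => ?_⟩
    have := congrFun h s
    simp only [hm, Pi.zero_apply] at this
    field_simp
    linarith [sub_eq_zero.1 this]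
  -- choose a good point y
  have hy : ∃ y : Fin k → ℚ, ∀ j, ¬ par β t j → (∑ s, m j s * y s) ≠ 0 := by
    set NP := Finset.univ.filter (fun j => ¬ par β t j) with hNP
    set P := ∏ j ∈ NP, Lq (m j) with hP
    have hPne : P ≠ 0 :=
      Finset.prod_ne_zero_iff.2 fun j hj =>
        Lq_ne_zero (hmne j (by simpa [hNP] using hj))
    have : ¬ ∀ y : Fin k → ℚ, MvPolynomial.eval y P = 0 := by
      intro hall
      exact hPne (MvPolynomial.funext fun y => by rw [hall y, map_zero])
    push_neg at this
    obtain ⟨y, hyP⟩ := this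
    refine ⟨y, fun j hj => ?_⟩
    have hjNP : j ∈ NP := by simp [hNP, hj]
    rw [hP, map_prod] at hyP
    have := Finset.prod_ne_zero_iff.1 hyP j hjNP
    simpa [Lq] using this
  obtain ⟨y, hy⟩ := hy
  set u : ℚ := ∑ s, w s * y s with hu
  set A : Fin k → ℚ := fun s => W * y s - u * w s with hA
  set Φ : MvPolynomial (Fin k) ℚ →+* Polynomial ℚ :=
    MvPolynomial.eval₂Hom Polynomial.C
      (fun s => Polynomial.C (A s) + Polynomial.X * Polynomial.C (w s)) with hΦ
  set ee : Fin n → ℚ := fun j => ∑ s, (β j s : ℚ) * A s with hee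
  have hΦL : ∀ j, Φ (L β j) = Polynomial.C (ee j) + Polynomial.X * Polynomial.C (g j) := by
    intro j
    rw [L_eq_Lq, hΦ, MvPolynomial.coe_eval₂Hom, eval2_linear]
  -- computations of the constant terms
  have hbase : ∑ s, w s * A s = 0 := by
    have h1 : ∀ s, w s * A s = W * (w s * y s) - u * w s ^ 2 := by
      intro s
      simp only [hA]
      ring
    rw [Finset.sum_congr rfl fun s _ => h1 s, Finset.sum_sub_distrib,
      ← Finset.mul_sum, ← Finset.mul_sum, ← hu, ← hW]
    ring
  have hee_par : ∀ j, par β t j → ee j = 0 := by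
    rintro j ⟨r, hr⟩
    have : ∀ s, (β j s : ℚ) * A s = r * (w s * A s) := by
      intro s
      rw [hr s]
      simp only [hw]
      ring
    rw [hee]
    simp only
    rw [Finset.sum_congr rfl fun s _ => this s, ← Finset.mul_sum, hbase, mul_zero]
  have hee_np : ∀ j, ¬ par β t j → ee j ≠ 0 := by
    intro j hj
    have h1 : ee j = ∑ s, m j s * y s := by
      have hterm : ∀ s, (β j s : ℚ) * A s = W * ((β j s : ℚ) * y s) - (β j s : ℚ) * w s * u := by
        intro s
        simp only [hA]
        ring
      have hterm2 : ∀ s, m j s * y s = W * ((β j s : ℚ) * y s) - g j * (w s * y s) := by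
        intro s
        simp only [hm]
        ring
      rw [hee]
      simp only
      rw [Finset.sum_congr rfl fun s _ => hterm s,
        Finset.sum_congr (rfl : Finset.univ = Finset.univ) fun s _ => hterm2 s,
        Finset.sum_sub_distrib, Finset.sum_sub_distrib]
      congr 1
      rw [← Finset.sum_mul, ← Finset.mul_sum]
    rw [h1]
    exact hy j hj
  have hg_par : ∀ j, par β t j → g j ≠ 0 := by
    rintro j ⟨r, hr⟩
    have hr0 := par_r_ne_zero (hβ j) hr
    have : g j = r * W := by
      rw [hg, hW]
      simp only
      rw [Finset.mul_sum]
      refine Finset.sum_congr rfl fun s _ => ?_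
      rw [hr s]
      ring
    rw [this]
    exact mul_ne_zero hr0 hWne
  set PP : Fin n → Polynomial ℚ := fun j => Polynomial.C (ee j) + Polynomial.X * Polynomial.C (g j)
    with hPP
  have hPPne : ∀ j, PP j ≠ 0 := by
    intro j
    by_cases hp : par β t j
    · rw [hPP]
      simp only [hee_par j hp, map_zero, zero_add]
      exact mul_ne_zero Polynomial.X_ne_zero (by simpa using hg_par j hp)
    · intro h0
      apply hee_np j hp
      have := congrArg (Polynomial.eval 0) h0
      simpa [hPP] using this
  have hρ : ∀ j, (PP j).rootMultiplicity 0 = if par β t j then 1 else 0 := by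
    intro j
    by_cases hp : par β t j
    · rw [if_pos hp, hPP]
      simp only [hee_par j hp]
      exact rootMult_linear_of_root (g j) (hg_par j hp)
    · rw [if_neg hp, hPP]
      exact rootMult_linear_of_ne _ _ (hee_np j hp)
  -- apply Φ to the polynomial identity
  have EΦ : (∏ j : Fin n, PP j ^ (a j)) = Polynomial.C q * ∏ j : Fin n, PP j ^ (b j) := by
    have := congrArg Φ E
    rw [map_prod, map_mul, map_prod] at this
    simp only [map_pow, hΦL] at this
    rw [show Φ (MvPolynomial.C q) = Polynomial.C q by
      rw [hΦ]; exact MvPolynomial.eval₂Hom_C _ _ _] at this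
    exact this
  -- count root multiplicities at 0
  have hLmul : (∏ j : Fin n, PP j ^ (a j)).rootMultiplicity 0
      = ∑ j : Fin n, a j * (PP j).rootMultiplicity 0 := by
    rw [rootMult_prod _ _ (fun j _ => pow_ne_zero _ (hPPne j))]
    exact Finset.sum_congr rfl fun j _ => rootMult_pow (hPPne j) (a j) 0
  have hRmul : (Polynomial.C q * ∏ j : Fin n, PP j ^ (b j)).rootMultiplicity 0
      = ∑ j : Fin n, b j * (PP j).rootMultiplicity 0 := by
    rw [Polynomial.rootMultiplicity_mul
      (mul_ne_zero (by simpa using hqne)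
        (Finset.prod_ne_zero_iff.2 fun j _ => pow_ne_zero _ (hPPne j))),
      Polynomial.rootMultiplicity_C, zero_add,
      rootMult_prod _ _ (fun j _ => pow_ne_zero _ (hPPne j))]
    exact Finset.sum_congr rfl fun j _ => rootMult_pow (hPPne j) (b j) 0
  have hsum : ∑ j : Fin n, a j * (PP j).rootMultiplicity 0
      = ∑ j : Fin n, b j * (PP j).rootMultiplicity 0 := by
    rw [← hLmul, ← hRmul, EΦ]
  have hsum2 : (∑ j ∈ Finset.univ.filter (par β t), a j)
      = ∑ j ∈ Finset.univ.filter (par β t), b j := by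
    have e1 : ∀ (c : Fin n → ℕ), ∑ j : Fin n, c j * (PP j).rootMultiplicity 0
        = ∑ j ∈ Finset.univ.filter (par β t), c j := by
      intro c
      rw [Finset.sum_filter]
      refine Finset.sum_congr rfl fun j _ => ?_
      rw [hρ j]
      by_cases hp : par β t j <;> simp [hp]
    rw [← e1 a, ← e1 b, hsum]
  -- conclude over ℤ
  have : ∑ j ∈ Finset.univ.filter (par β t), β j i
      = (∑ j ∈ Finset.univ.filter (par β t), (a j : ℤ))
        - ∑ j ∈ Finset.univ.filter (par β t), (b j : ℤ) := by
    rw [← Finset.sum_sub_distrib]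
    refine Finset.sum_congr rfl fun j _ => ?_
    simp only [ha, hb]
    omega
  rw [this, ← Nat.cast_sum, ← Nat.cast_sum, hsum2, sub_self]

end HornAux
namespace HornAux

variable {n k : ℕ}

lemma Lq_smul (r : ℚ) (c : Fin k → ℚ) :
    Lq (fun s => r * c s) = MvPolynomial.C r * Lq c := by
  simp [Lq, Finset.mul_sum, MvPolynomial.C_mul, mul_assoc]

lemma prod_zpow_eq {K : Type*} [Field K] {x : K} (hx : x ≠ 0) {ι : Type*}
    (s : Finset ι) (e : ι → ℤ) :
    ∏ j ∈ s, x ^ e j = x ^ (∑ j ∈ s, e j) := by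
  classical
  induction s using Finset.cons_induction with
  | empty => simp
  | cons a s ha ih => rw [Finset.prod_cons, Finset.sum_cons, zpow_add₀ hx, ih]

open Classical in
lemma reverse_key (β : Fin n → Fin k → ℤ) (hβ : ∀ j, β j ≠ 0) (i : Fin k)
    (hQS : ∀ t : Fin n, ∑ j ∈ Finset.univ.filter (par β t), β j i = 0) :
    ∃ q : ℚ, (∏ j : Fin n,
        (algebraMap (MvPolynomial (Fin k) ℚ) (FractionRing (MvPolynomial (Fin k) ℚ))
          (L β j)) ^ (β j i)) =
      algebraMap (MvPolynomial (Fin k) ℚ) (FractionRing (MvPolynomial (Fin k) ℚ))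
        (MvPolynomial.C q) := by
  classical
  set φ := algebraMap (MvPolynomial (Fin k) ℚ) (FractionRing (MvPolynomial (Fin k) ℚ)) with hφ
  have hinj : Function.Injective φ := IsFractionRing.injective _ _
  have hL0 : ∀ j, φ (L β j) ≠ 0 := fun j => by
    rw [map_ne_zero_iff φ hinj]
    exact L_ne_zero (hβ j)
  set cls : Fin n → Finset (Fin n) := fun t => Finset.univ.filter (par β t) with hcls
  have hself : ∀ j, j ∈ cls j := fun j => by
    simp [hcls, par_refl β j]
  have hcls_eq : ∀ {j j' : Fin n}, par β j j' → cls j = cls j' := by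
    intro j j' h
    ext x
    simp only [hcls, Finset.mem_filter, Finset.mem_univ, true_and]
    constructor
    · intro hx
      exact par_trans (par_symm (hβ j') h) hx
    · intro hx
      exact par_trans h hx
  set rep : Fin n → Fin n := fun j => (cls j).min' ⟨j, hself j⟩ with hrep
  have hrep_par : ∀ j, par β j (rep j) := by
    intro j
    have : rep j ∈ cls j := Finset.min'_mem _ _
    simpa [hcls] using this
  have hrep_eq : ∀ {j j' : Fin n}, par β j j' → rep j = rep j' := by
    intro j j' h
    simp only [hrep]
    congr 1
    exact hcls_eq h
  have hpar2 : ∀ j, par β (rep j) j := fun j => par_symm (hβ (rep j)) (hrep_par j)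
  set img := Finset.univ.image rep with himg
  have hrep_idem : ∀ t ∈ img, rep t = t := by
    intro t ht
    obtain ⟨j, _, rfl⟩ := Finset.mem_image.1 ht
    exact (hrep_eq (hrep_par j)).symm
  have hfib : ∀ t ∈ img, Finset.univ.filter (fun j => rep j = t) = cls t := by
    intro t ht
    ext x
    simp only [Finset.mem_filter, Finset.mem_univ, true_and, hcls]
    constructor
    · rintro rfl
      exact hpar2 x
    · intro hx
      rw [hrep_eq (par_symm (hβ x) hx), hrep_idem t ht]
  set rr : Fin n → ℚ := fun j => (hpar2 j).choose with hrr
  have hrrspec : ∀ j s, (β j s : ℚ) = rr j * β (rep j) s := fun j => (hpar2 j).choose_spec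
  have hrr0 : ∀ j, rr j ≠ 0 := fun j => par_r_ne_zero (hβ j) (hrrspec j)
  have hLfac : ∀ j, L β j = MvPolynomial.C (rr j) * L β (rep j) := by
    intro j
    rw [L_eq_Lq, L_eq_Lq, ← Lq_smul]
    congr 1
    funext s
    exact hrrspec j s
  set ψ : ℚ →+* FractionRing (MvPolynomial (Fin k) ℚ) :=
    φ.comp (MvPolynomial.C : ℚ →+* MvPolynomial (Fin k) ℚ) with hψ
  refine ⟨∏ t ∈ img, ∏ j ∈ cls t, rr j ^ (β j i), ?_⟩
  have hfibprod := Finset.prod_fiberwise_of_maps_to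
    (s := (Finset.univ : Finset (Fin n))) (g := rep) (t := img)
    (fun x _ => Finset.mem_image_of_mem rep (Finset.mem_univ x))
    (fun j => φ (L β j) ^ (β j i))
  rw [← hfibprod]
  have hinner : ∀ t ∈ img,
      ∏ j ∈ Finset.univ.filter (fun j => rep j = t), φ (L β j) ^ (β j i)
        = ψ (∏ j ∈ cls t, rr j ^ (β j i)) := by
    intro t ht
    rw [hfib t ht]
    have hstep : ∀ j ∈ cls t,
        φ (L β j) ^ (β j i) = ψ (rr j ^ (β j i)) * φ (L β t) ^ (β j i) := by
      intro j hj
      have hjt : rep j = t := by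
        have : j ∈ Finset.univ.filter (fun j => rep j = t) := by rw [hfib t ht]; exact hj
        simpa using this
      rw [hLfac j, hjt, map_mul, mul_zpow]
      congr 1
      rw [map_zpow₀ ψ]
      rfl
    rw [Finset.prod_congr rfl hstep, Finset.prod_mul_distrib,
      prod_zpow_eq (hL0 t) (cls t) (fun j => β j i)]
    have : ∑ j ∈ cls t, β j i = 0 := hQS t
    rw [this, zpow_zero, mul_one, ← map_prod]
  rw [Finset.prod_congr rfl hinner, ← map_prod]
  rfl

end HornAux
open Classical in
/-- The Horn uniformization is constant iff the weights are quasi-symmetric. -/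
theorem stmt3 {n k : ℕ} (β : Fin n → Fin k → ℤ) (hβ : ∀ j, β j ≠ 0)
    (hspan : Submodule.span ℝ (Set.range fun j => fun s => (β j s : ℝ)) = ⊤) :
    (∀ i : Fin k, ∃ q : ℚ,
        (∏ j : Fin n,
            (algebraMap (MvPolynomial (Fin k) ℚ) (FractionRing (MvPolynomial (Fin k) ℚ))
              (∑ s : Fin k, (β j s : ℚ) • MvPolynomial.X s)) ^ (β j i)) =
          algebraMap (MvPolynomial (Fin k) ℚ) (FractionRing (MvPolynomial (Fin k) ℚ))
            (MvPolynomial.C q)) ↔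
    (∀ ℓ : Submodule ℝ (Fin k → ℝ), Module.finrank ℝ ℓ = 1 →
        ∑ j ∈ Finset.univ.filter (fun j => (fun s => (β j s : ℝ)) ∈ ℓ),
          (fun s => (β j s : ℝ)) = 0) := by
  classical
  have hv : ∀ t : Fin n, (fun s => (β t s : ℝ)) ≠ 0 := by
    intro t h
    apply hβ t
    funext s
    have : ((β t s : ℤ) : ℝ) = 0 := by simpa using congrFun h s
    exact_mod_cast this
  constructor
  · intro H ℓ hℓ
    by_cases hne : ∃ j : Fin n, (fun s => (β j s : ℝ)) ∈ ℓ
    · obtain ⟨t, ht⟩ := hne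
      have hsp : Submodule.span ℝ {fun s => (β t s : ℝ)} = ℓ := by
        apply Submodule.eq_of_le_of_finrank_eq
        · rw [Submodule.span_le]
          simpa using ht
        · rw [finrank_span_singleton (hv t), hℓ]
      rw [← hsp]
      have hfeq : (Finset.univ.filter
            (fun j => (fun s => (β j s : ℝ)) ∈ Submodule.span ℝ {fun s => (β t s : ℝ)}))
          = Finset.univ.filter (HornAux.par β t) := by
        apply Finset.filter_congr
        intro j _
        exact HornAux.mem_span_iff_par (hβ t)
      rw [hfeq]
      funext i
      rw [Finset.sum_apply]
      obtain ⟨q, hq⟩ := H i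
      have key := HornAux.forward_key β hβ i t q hq
      have : ∑ j ∈ Finset.univ.filter (HornAux.par β t), ((β j i : ℤ) : ℝ) = 0 := by
        exact_mod_cast key
      simpa using this
    · push_neg at hne
      rw [Finset.filter_eq_empty_iff.2 (fun j _ => hne j), Finset.sum_empty]
  · intro H i
    apply HornAux.reverse_key β hβ i
    intro t
    have h1 := H (Submodule.span ℝ {fun s => (β t s : ℝ)}) (finrank_span_singleton (hv t))
    have hfeq : (Finset.univ.filter
          (fun j => (fun s => (β j s : ℝ)) ∈ Submodule.span ℝ {fun s => (β t s : ℝ)}))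
        = Finset.univ.filter (HornAux.par β t) := by
      apply Finset.filter_congr
      intro j _
      exact HornAux.mem_span_iff_par (hβ t)
    rw [hfeq] at h1
    have h2 := congrFun h1 i
    rw [Finset.sum_apply] at h2
    have h3 : ∑ j ∈ Finset.univ.filter (HornAux.par β t), ((β j i : ℤ) : ℝ) = 0 := by
      simpa using h2
    exact_mod_cast h3
end

section
/- For a quasi-symmetric collection of weights β₁,…,βₙ in ℝᵏ, the polytopes ∇̄ := {β ∈ ℝᵏ : −η_l/2 ≤ ⟨l,β⟩ ≤ η_l/2 for all l ∈ ℤᵏ} and (1/2)Σ̄ coincide, where Σ̄ := {Σⱼ aⱼβⱼ : aⱼ ∈ [−1,0]} and η_l := max{⟨l,μ⟩ : μ ∈ Σ̄}. -/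
open Classical Pointwise

/-- The linear map `a ↦ ∑ j, a j • β j`. -/
private def auxT {n k : ℕ} (β : Fin n → Fin k → ℝ) : (Fin n → ℝ) →ₗ[ℝ] (Fin k → ℝ) where
  toFun a := ∑ j, a j • β j
  map_add' a b := by simp [add_smul, Finset.sum_add_distrib]
  map_smul' c a := by simp [smul_smul, Finset.smul_sum]

private lemma aux_key {n k : ℕ} (β : Fin n → Fin k → ℝ) (l : Fin k → ℝ) (a : Fin n → ℝ) :
    ∑ i, l i * (∑ j, a j • β j) i = ∑ j, a j * ∑ i, l i * β j i := by
  simp only [Finset.sum_apply, Pi.smul_apply, smul_eq_mul, Finset.mul_sum]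
  rw [Finset.sum_comm]
  exact Finset.sum_congr rfl fun j _ => Finset.sum_congr rfl fun i _ => by ring

/-- From quasi-symmetry, the sum of all weights vanishes. -/
private lemma aux_sum_zero {n k : ℕ} (β : Fin n → Fin k → ℝ)
    (hqs : ∀ ℓ : Submodule ℝ (Fin k → ℝ), Module.finrank ℝ ℓ = 1 →
      ∑ j ∈ Finset.univ.filter (fun j => β j ∈ ℓ), β j = 0) :
    ∑ j, β j = (0 : Fin k → ℝ) := by
  classical
  have h1 : ∑ j ∈ Finset.univ.filter (fun j => β j ≠ 0), β j = ∑ j, β j :=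
    Finset.sum_filter_ne_zero _
  rw [← h1]
  set s := Finset.univ.filter (fun j => β j ≠ 0) with hs
  have h2 : ∑ ℓ ∈ s.image (fun j => Submodule.span ℝ {β j}),
      ∑ j ∈ s.filter (fun j => Submodule.span ℝ {β j} = ℓ), β j = ∑ j ∈ s, β j :=
    Finset.sum_fiberwise_of_maps_to (fun j hj => Finset.mem_image_of_mem _ hj) _
  rw [← h2]
  apply Finset.sum_eq_zero
  intro ℓ hℓ
  obtain ⟨j0, hj0s, hj0⟩ := Finset.mem_image.mp hℓ
  have hj0ne : β j0 ≠ 0 := by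
    simpa [hs] using hj0s
  have hrank : Module.finrank ℝ ℓ = 1 := by
    rw [← hj0]; exact finrank_span_singleton hj0ne
  have heq : ∑ j ∈ s.filter (fun j => Submodule.span ℝ {β j} = ℓ), β j
      = ∑ j ∈ Finset.univ.filter (fun j => β j ∈ ℓ), β j := by
    apply Finset.sum_subset
    · intro j hj
      simp only [hs, Finset.mem_filter, Finset.mem_univ, true_and] at hj ⊢
      rw [← hj.2]
      exact Submodule.mem_span_singleton_self _
    · intro j hj hnj
      simp only [hs, Finset.mem_filter, Finset.mem_univ, true_and] at hj hnj
      by_contra hne0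
      apply hnj ⟨hne0, ?_⟩
      have hle : Submodule.span ℝ {β j} ≤ ℓ := Submodule.span_le.mpr (by simpa using hj)
      exact Submodule.eq_of_le_of_finrank_le hle
        (by rw [hrank, finrank_span_singleton hne0])
  rw [heq]
  exact hqs ℓ hrank

open Classical Pointwise in
/-- For quasi-symmetric weights, `∇̄ = (1/2)Σ̄` (Halpern-Leistner–Sam, Lemma 2.8). -/
theorem stmt6 {n k : ℕ} (β : Fin n → Fin k → ℝ)
    (hqs : ∀ ℓ : Submodule ℝ (Fin k → ℝ), Module.finrank ℝ ℓ = 1 →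
      ∑ j ∈ Finset.univ.filter (fun j => β j ∈ ℓ), β j = 0) :
    {x : Fin k → ℝ | ∀ l : Fin k → ℝ,
        |∑ i, l i * x i| ≤ (sSup {r : ℝ | ∃ a : Fin n → ℝ,
          (∀ j, a j ∈ Set.Icc (-1 : ℝ) 0) ∧ r = ∑ i, l i * (∑ j, a j • β j) i}) / 2} =
      (1/2 : ℝ) • {x : Fin k → ℝ | ∃ a : Fin n → ℝ,
        (∀ j, a j ∈ Set.Icc (-1 : ℝ) 0) ∧ x = ∑ j, a j • β j} := by
  classical
  have hsum := aux_sum_zero β hqs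
  have hcube_iff : ∀ a : Fin n → ℝ, (∀ j, a j ∈ Set.Icc (-1 : ℝ) 0)
      ↔ a ∈ Set.Icc (-1 : Fin n → ℝ) 0 := by
    intro a
    simp [Set.mem_Icc, Pi.le_def, forall_and]
  set S : Set (Fin k → ℝ) := {x | ∃ a : Fin n → ℝ,
    (∀ j, a j ∈ Set.Icc (-1 : ℝ) 0) ∧ x = ∑ j, a j • β j} with hSdef
  have hSimg : S = auxT β '' Set.Icc (-1 : Fin n → ℝ) 0 := by
    ext x
    constructor
    · rintro ⟨a, ha, rfl⟩
      exact ⟨a, (hcube_iff a).mp ha, rfl⟩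
    · rintro ⟨a, ha, rfl⟩
      exact ⟨a, (hcube_iff a).mpr ha, rfl⟩
  -- symmetry of S
  have hSneg : ∀ x ∈ S, -x ∈ S := by
    rintro x ⟨a, ha, rfl⟩
    refine ⟨fun j => -1 - a j, fun j => ?_, ?_⟩
    · have := ha j
      simp only [Set.mem_Icc] at this ⊢
      constructor <;> linarith [this.1, this.2]
    · have h : ∑ j, (-1 - a j) • β j = (∑ j, -((1:ℝ) • β j)) - ∑ j, a j • β j := by
        rw [← Finset.sum_sub_distrib]
        exact Finset.sum_congr rfl fun j _ => by
          rw [sub_smul, neg_smul]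
      rw [h]
      simp [hsum]
  -- membership and boundedness for the `η` sets
  have hmemE : ∀ (l : Fin k → ℝ) (a : Fin n → ℝ), (∀ j, a j ∈ Set.Icc (-1 : ℝ) 0) →
      (∑ i, l i * (∑ j, a j • β j) i) ∈ {r : ℝ | ∃ a : Fin n → ℝ,
          (∀ j, a j ∈ Set.Icc (-1 : ℝ) 0) ∧ r = ∑ i, l i * (∑ j, a j • β j) i} :=
    fun l a ha => ⟨a, ha, rfl⟩
  have hbdd : ∀ l : Fin k → ℝ, BddAbove {r : ℝ | ∃ a : Fin n → ℝ,
      (∀ j, a j ∈ Set.Icc (-1 : ℝ) 0) ∧ r = ∑ i, l i * (∑ j, a j • β j) i} := by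
    intro l
    refine ⟨∑ j, |∑ i, l i * β j i|, ?_⟩
    rintro r ⟨a, ha, rfl⟩
    rw [aux_key]
    apply Finset.sum_le_sum
    intro j _
    calc a j * ∑ i, l i * β j i ≤ |a j * ∑ i, l i * β j i| := le_abs_self _
      _ = |a j| * |∑ i, l i * β j i| := abs_mul _ _
      _ ≤ 1 * |∑ i, l i * β j i| := by
          apply mul_le_mul_of_nonneg_right _ (abs_nonneg _)
          rcases ha j with ⟨h1, h2⟩
          rw [abs_le]; constructor <;> linarith
      _ = |∑ i, l i * β j i| := one_mul _
  have hne : ∀ l : Fin k → ℝ, ((0 : ℝ) ∈ {r : ℝ | ∃ a : Fin n → ℝ,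
      (∀ j, a j ∈ Set.Icc (-1 : ℝ) 0) ∧ r = ∑ i, l i * (∑ j, a j • β j) i}) := by
    intro l
    exact ⟨fun _ => 0, fun j => by simp, by simp⟩
  -- topological properties of (1/2) • S
  have hconv : Convex ℝ ((1/2 : ℝ) • S) := by
    apply Convex.smul
    rw [hSimg]
    exact (convex_Icc _ _).linear_image (auxT β)
  have hScompact : IsCompact S := by
    rw [hSimg]
    exact (isCompact_Icc).image (auxT β).continuous_of_finiteDimensional
  have hcompact : IsCompact ((1/2 : ℝ) • S) := by
    have h : (1/2 : ℝ) • S = (fun x : Fin k → ℝ => (1/2 : ℝ) • x) '' S := by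
      rw [Set.image_smul]
    rw [h]
    exact hScompact.image (continuous_const_smul _)
  have hclosed : IsClosed ((1/2 : ℝ) • S) := hcompact.isClosed
  -- the set equality
  ext x
  simp only [Set.mem_setOf_eq]
  constructor
  · intro hx
    by_contra hxS
    obtain ⟨f, u, hfu, hux⟩ := geometric_hahn_banach_closed_point hconv hclosed hxS
    set l : Fin k → ℝ := fun i => f (Pi.single i 1) with hl
    have hrep : ∀ y : Fin k → ℝ, f y = ∑ i, l i * y i := by
      intro y
      have := (f : (Fin k → ℝ) →ₗ[ℝ] ℝ).pi_apply_eq_sum_univ y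
      simp only [ContinuousLinearMap.coe_coe] at this
      rw [this]
      refine Finset.sum_congr rfl fun i _ => ?_
      rw [smul_eq_mul, mul_comm]
      congr 2
      funext j
      simp [Pi.single_apply, eq_comm]
    have heta : sSup {r : ℝ | ∃ a : Fin n → ℝ,
        (∀ j, a j ∈ Set.Icc (-1 : ℝ) 0) ∧ r = ∑ i, l i * (∑ j, a j • β j) i} ≤ 2 * u := by
      apply csSup_le ⟨0, hne l⟩
      rintro r ⟨a, ha, rfl⟩
      have hmem : (1/2 : ℝ) • (∑ j, a j • β j) ∈ (1/2 : ℝ) • S :=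
        Set.smul_mem_smul_set ⟨a, ha, rfl⟩
      have := hfu _ hmem
      rw [map_smul, smul_eq_mul, ← hrep] at *
      linarith
    have h1 := hx l
    have h2 : f x ≤ |∑ i, l i * x i| := by
      rw [hrep x]; exact le_abs_self _
    have : f x ≤ u := by
      calc f x ≤ |∑ i, l i * x i| := h2
        _ ≤ _ / 2 := h1
        _ ≤ 2 * u / 2 := by linarith [heta]
        _ = u := by ring
    linarith
  · rintro ⟨y, hy, rfl⟩ l
    obtain ⟨a, ha, rfl⟩ := hy
    have hpos : ∑ i, l i * (∑ j, a j • β j) i ≤ sSup {r : ℝ | ∃ a : Fin n → ℝ,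
        (∀ j, a j ∈ Set.Icc (-1 : ℝ) 0) ∧ r = ∑ i, l i * (∑ j, a j • β j) i} :=
      le_csSup (hbdd l) (hmemE l a ha)
    have hnegmem : -(∑ j, a j • β j) ∈ S := hSneg _ ⟨a, ha, rfl⟩
    obtain ⟨b, hb, hbeq⟩ := hnegmem
    have hneg : -(∑ i, l i * (∑ j, a j • β j) i) ≤ sSup {r : ℝ | ∃ a : Fin n → ℝ,
        (∀ j, a j ∈ Set.Icc (-1 : ℝ) 0) ∧ r = ∑ i, l i * (∑ j, a j • β j) i} := by
      have hval : ∑ i, l i * (∑ j, b j • β j) i = -(∑ i, l i * (∑ j, a j • β j) i) := by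
        rw [← hbeq]
        simp [mul_neg, Finset.sum_neg_distrib]
      have := le_csSup (hbdd l) (hmemE l b hb)
      rw [hval] at this
      exact this
    have habs : |∑ i, l i * (∑ j, a j • β j) i| ≤ sSup {r : ℝ | ∃ a : Fin n → ℝ,
        (∀ j, a j ∈ Set.Icc (-1 : ℝ) 0) ∧ r = ∑ i, l i * (∑ j, a j • β j) i} :=
      abs_le.mpr ⟨by linarith, hpos⟩
    have hhalf : ∑ i, l i * ((1/2 : ℝ) • ∑ j, a j • β j) i
        = (1/2 : ℝ) * ∑ i, l i * (∑ j, a j • β j) i := by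
      rw [Finset.mul_sum]
      exact Finset.sum_congr rfl fun i _ => by
        simp [Pi.smul_apply, smul_eq_mul]; ring
    rw [hhalf, abs_mul]
    have : |(1/2 : ℝ)| = 1/2 := by norm_num
    rw [this]
    linarith [habs, abs_nonneg (∑ i, l i * (∑ j, a j • β j) i)]
end

section
/- If β₁,…,βₙ ∈ ℝᵏ are quasi-symmetric and span ℝᵏ, then for every linear functional l whose kernel hyperplane H_l is spanned by the weights lying in it, the set of weights strictly positive on l is nonempty and Σ_{j:⟨l,βⱼ⟩>0} βⱼ = −Σ_{j:⟨l,βⱼ⟩<0} βⱼ ≠ 0, and moreover Σ_{j : βⱼ ∈ H_l} βⱼ = 0 (so the weights in H_l admit the trivial positive relation making H_l correspond to a face of the cone). -/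
open Classical in
lemma key_sum_zero {n k : ℕ} (β : Fin n → Fin k → ℝ)
    (hqs : ∀ ℓ : Submodule ℝ (Fin k → ℝ), Module.finrank ℝ ℓ = 1 →
      ∑ j ∈ Finset.univ.filter (fun j => β j ∈ ℓ), β j = 0)
    (T : Finset (Fin n))
    (hT : ∀ j ∈ T, ∀ i, β i ∈ Submodule.span ℝ {β j} → β i = 0 ∨ i ∈ T) :
    ∑ j ∈ T, β j = 0 := by
  classical
  set s := T.filter (fun j => β j ≠ 0) with hs
  have h1 : ∑ j ∈ T, β j = ∑ j ∈ s, β j := by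
    refine (Finset.sum_subset (Finset.filter_subset _ _) ?_).symm
    intro x hx hnx
    simp only [hs, Finset.mem_filter, not_and, not_not] at hnx
    exact hnx hx
  rw [h1]
  rw [← Finset.sum_fiberwise_of_maps_to (g := fun j => Submodule.span ℝ {β j})
      (t := s.image (fun j => Submodule.span ℝ {β j})) (fun x hx => Finset.mem_image_of_mem _ hx)]
  refine Finset.sum_eq_zero ?_
  intro ℓ hℓ
  obtain ⟨j0, hj0, hj0ℓ⟩ := Finset.mem_image.mp hℓ
  simp only [hs, Finset.mem_filter] at hj0
  have hrank : Module.finrank ℝ ℓ = 1 := by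
    rw [← hj0ℓ]; exact finrank_span_singleton hj0.2
  have hfib : ∑ x ∈ s.filter (fun x => Submodule.span ℝ {β x} = ℓ), β x
      = ∑ j ∈ Finset.univ.filter (fun j => β j ∈ ℓ), β j := by
    refine Finset.sum_subset ?_ ?_
    · intro x hx
      simp only [Finset.mem_filter] at hx ⊢
      exact ⟨Finset.mem_univ _, hx.2 ▸ Submodule.mem_span_singleton_self _⟩
    · intro x hx hnx
      by_contra hne
      simp only [Finset.mem_filter, hs, not_and] at hnx hx
      have hxℓ : β x ∈ Submodule.span ℝ {β j0} := hj0ℓ ▸ hx.2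
      have hxT : x ∈ T := (hT j0 hj0.1 x hxℓ).resolve_left hne
      -- span {β x} = ℓ
      obtain ⟨c, hc⟩ := Submodule.mem_span_singleton.mp hxℓ
      have hc0 : c ≠ 0 := by rintro rfl; simp at hc; exact hne hc.symm
      have hspx : Submodule.span ℝ {β x} = ℓ := by
        rw [← hj0ℓ]
        apply le_antisymm
        · rw [Submodule.span_singleton_le_iff_mem]; exact hxℓ
        · rw [Submodule.span_singleton_le_iff_mem, Submodule.mem_span_singleton]
          exact ⟨c⁻¹, by rw [← hc, smul_smul, inv_mul_cancel₀ hc0, one_smul]⟩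
      exact hnx ⟨hxT, hne⟩ hspx
  rw [hfib]
  exact hqs ℓ hrank

open Classical in
/-- Properties of quasi-symmetric spanning weights with respect to a hyperplane
`H_l = ker l` that is spanned by the weights lying in it. -/
theorem stmt17 {n k : ℕ} (β : Fin n → Fin k → ℝ)
    (hqs : ∀ ℓ : Submodule ℝ (Fin k → ℝ), Module.finrank ℝ ℓ = 1 →
      ∑ j ∈ Finset.univ.filter (fun j => β j ∈ ℓ), β j = 0)
    (hspan : Submodule.span ℝ (Set.range β) = ⊤)
    (l : (Fin k → ℝ) →ₗ[ℝ] ℝ) (hl : l ≠ 0)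
    (hH : Submodule.span ℝ {v | ∃ j, v = β j ∧ l (β j) = 0} = LinearMap.ker l) :
    (∑ j ∈ Finset.univ.filter (fun j => l (β j) = 0), β j = 0) ∧
    (∑ j ∈ Finset.univ.filter (fun j => 0 < l (β j)), β j =
      -∑ j ∈ Finset.univ.filter (fun j => l (β j) < 0), β j) ∧
    (∃ j, 0 < l (β j)) ∧
    (∑ j ∈ Finset.univ.filter (fun j => 0 < l (β j)), β j ≠ 0) ∧
    ((∃ j, l (β j) ≠ 0) →
      0 < ∑ j ∈ Finset.univ.filter (fun j => 0 < l (β j)), l (β j)) := by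
  classical
  -- (a)
  have ha : ∑ j ∈ Finset.univ.filter (fun j => l (β j) = 0), β j = 0 := by
    apply key_sum_zero β hqs
    intro j hj i hi
    simp only [Finset.mem_filter] at hj ⊢
    obtain ⟨c, hc⟩ := Submodule.mem_span_singleton.mp hi
    right
    refine ⟨Finset.mem_univ _, ?_⟩
    rw [← hc, map_smul, smul_eq_mul, hj.2, mul_zero]
  -- total sum is zero
  have htot : ∑ j, β j = 0 := by
    have := key_sum_zero β hqs Finset.univ (fun j _ i _ => Or.inr (Finset.mem_univ i))
    simpa using this
  -- (b)
  have hb : ∑ j ∈ Finset.univ.filter (fun j => 0 < l (β j)), β j =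
      -∑ j ∈ Finset.univ.filter (fun j => l (β j) < 0), β j := by
    have h2 : ∑ j ∈ Finset.univ.filter (fun j => ¬ l (β j) = 0), β j =
        ∑ j ∈ Finset.univ.filter (fun j => 0 < l (β j)), β j +
        ∑ j ∈ Finset.univ.filter (fun j => l (β j) < 0), β j := by
      rw [← Finset.sum_filter_add_sum_filter_not
        (Finset.univ.filter (fun j => ¬ l (β j) = 0)) (fun j => 0 < l (β j)) β,
        Finset.filter_filter, Finset.filter_filter]
      congr 1
      · apply Finset.sum_congr _ (fun _ _ => rfl)
        apply Finset.filter_congr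
        intro x _
        constructor
        · exact fun h => h.2
        · intro h; exact ⟨ne_of_gt h, h⟩
      · apply Finset.sum_congr _ (fun _ _ => rfl)
        apply Finset.filter_congr
        intro x _
        constructor
        · intro h
          rcases lt_trichotomy (l (β x)) 0 with h' | h' | h'
          · exact h'
          · exact absurd h' h.1
          · exact absurd h' h.2
        · intro h; exact ⟨ne_of_lt h, not_lt_of_gt h⟩
    have h1 := (Finset.sum_filter_add_sum_filter_not Finset.univ (fun j => l (β j) = 0) β)
    rw [htot, ha, zero_add, h2] at h1
    exact eq_neg_of_add_eq_zero_left h1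
  -- some j with l (β j) ≠ 0
  have hne0 : ∃ j, l (β j) ≠ 0 := by
    by_contra h
    push_neg at h
    apply hl
    rw [← LinearMap.ker_eq_top, ← top_le_iff, ← hspan, Submodule.span_le]
    rintro _ ⟨j, rfl⟩
    exact h j
  -- (c)
  have hc : ∃ j, 0 < l (β j) := by
    by_contra h
    push_neg at h
    obtain ⟨j0, hj0⟩ := hne0
    have hj0neg : l (β j0) < 0 := lt_of_le_of_ne (h j0) hj0
    have hpos_empty : Finset.univ.filter (fun j => 0 < l (β j)) = ∅ := by
      apply Finset.filter_eq_empty_iff.mpr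
      intro x _
      exact not_lt_of_ge (h x)
    have hzero : ∑ j ∈ Finset.univ.filter (fun j => l (β j) < 0), β j = 0 := by
      have := hb
      rw [hpos_empty, Finset.sum_empty] at this
      exact (neg_eq_zero.mp this.symm)
    have := congrArg l hzero
    rw [map_sum, map_zero] at this
    have hlt : ∑ j ∈ Finset.univ.filter (fun j => l (β j) < 0), l (β j) < 0 := by
      have hne : (Finset.univ.filter (fun j => l (β j) < 0)).Nonempty :=
        ⟨j0, Finset.mem_filter.mpr ⟨Finset.mem_univ _, hj0neg⟩⟩
      calc ∑ j ∈ Finset.univ.filter (fun j => l (β j) < 0), l (β j)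
          < ∑ _j ∈ Finset.univ.filter (fun j => l (β j) < 0), (0:ℝ) :=
            Finset.sum_lt_sum_of_nonempty hne (fun i hi => (Finset.mem_filter.mp hi).2)
        _ = 0 := by simp
    exact absurd this (ne_of_lt hlt)
  -- (e)
  have he : 0 < ∑ j ∈ Finset.univ.filter (fun j => 0 < l (β j)), l (β j) := by
    obtain ⟨j0, hj0⟩ := hc
    apply Finset.sum_pos (fun i hi => (Finset.mem_filter.mp hi).2)
    exact ⟨j0, Finset.mem_filter.mpr ⟨Finset.mem_univ _, hj0⟩⟩
  -- (d)
  have hd : ∑ j ∈ Finset.univ.filter (fun j => 0 < l (β j)), β j ≠ 0 := by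
    intro h
    have := congrArg l h
    rw [map_sum, map_zero] at this
    exact absurd this (ne_of_gt he)
  exact ⟨ha, hb, hc, hd, fun _ => he⟩
end
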